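/- Let 1 ≤ p ≤ 2 and 1 ≤ K ≤ N, and let f_1,…,f_K be vectors in ℂ^N. Define P_p(f_1,…,f_K) = (∑_{1≤j_1<⋯<j_K≤N} |perm[(f_{i,j_m})]|^p)^{1/p}. Then P_p(f_1,…,f_K) ≤ C(N,K)^{1/p} · (K!/N^{K/2}) · ∏_{i=1}^K |f_i|, where |f_i| is the Euclidean norm. -/

import Mathlib

open scoped BigOperators

/-- The permanent of a `K × K` complex matrix. -/
noncomputable def perm {K : ℕ} (F : Matrix (Fin K) (Fin K) ℂ) : ℂ :=
  ∑ σ : Equiv.Perm (Fin K), ∏ j, F (σ j) j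

/-- Euclidean norm of a vector in `ℂ^N`. -/
noncomputable def vecEnorm {N : ℕ} (f : Fin N → ℂ) : ℝ :=
  Real.sqrt (∑ i, ‖f i‖ ^ 2)

/-- For `s` a `K`-element subset of column indices, the `K × K` submatrix of the
matrix with rows `f 1, …, f K` whose columns are given by the elements of `s` in
increasing order. -/
noncomputable def subMat {N K : ℕ} (f : Fin K → Fin N → ℂ)
    (s : {s : Finset (Fin N) // s ∈ Finset.univ.powersetCard K}) :
    Matrix (Fin K) (Fin K) ℂ :=
  fun i m => f i (s.1.orderEmbOfFin (Finset.mem_powersetCard_univ.mp s.2) m)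

/-- `P(f₁,…,f_K)² = ∑_{j₁<⋯<j_K} |perm (f_{i,j_m})|²`. -/
noncomputable def Ppow {N K : ℕ} (p : ℝ) (f : Fin K → Fin N → ℂ) : ℝ :=
  ∑ s ∈ (Finset.univ.powersetCard K : Finset (Finset (Fin N))).attach,
    ‖perm (subMat f s)‖ ^ p

/-!
Write `permOn f S` for the permanent of the rows `f` restricted to the columns `S`, a sum over
injections into `S`. Expanding along the first row, the family `(permOn f S)_{#S = k+1}` is the
image of `(permOn (tail f) S)_{#S = k}` under the raising operator
`Q ↦ (J ↦ ∑_{j ∈ J} f₀ j * Q (J \ {j}))`. On the subsets of an `n`-set this operator, from level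
`k` to level `k + 1`, has squared norm at most `(k + 1)(n - k)/n · ‖f₀‖²`: split off one point and
use the induction hypothesis twice together with Cauchy–Schwarz. Iterating gives
`∑_{#S = K} |perm|² ≤ K!² C(N,K) / N^K · ∏ ‖fᵢ‖²`, and for `p ≤ 2` the `ℓ^p` norm of a family of
`C(N,K)` numbers is at most `C(N,K)^(1/p - 1/2)` times its `ℓ²` norm.
-/

open Finset

lemma Finset.sum_powersetCard_succ_insert {α β : Type*} [DecidableEq α] [AddCommMonoid β]
    {a : α} {s : Finset α} (ha : a ∉ s) (k : ℕ) (g : Finset α → β) :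
    ∑ t ∈ (insert a s).powersetCard (k + 1), g t =
      ∑ t ∈ s.powersetCard (k + 1), g t + ∑ t ∈ s.powersetCard k, g (insert a t) := by
  rw [powersetCard_succ_insert ha, sum_union, sum_image]
  · exact insert_erase_invOn.2.injOn.mono fun t ht ↦ notMem_mono (mem_powersetCard.1 ht).1 ha
  · aesop (add simp [disjoint_left, mem_powersetCard, insert_subset_iff])

lemma Finset.sum_norm_add_sq_le {ι E : Type*} [SeminormedAddCommGroup E] (s : Finset ι)
    (u v : ι → E) :
    ∑ i ∈ s, ‖u i + v i‖ ^ 2 ≤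
      ∑ i ∈ s, ‖u i‖ ^ 2 + 2 * √((∑ i ∈ s, ‖u i‖ ^ 2) * ∑ i ∈ s, ‖v i‖ ^ 2) +
        ∑ i ∈ s, ‖v i‖ ^ 2 := by
  have hCS := Real.sum_mul_le_sqrt_mul_sqrt s (fun i ↦ ‖u i‖) (fun i ↦ ‖v i‖)
  rw [← Real.sqrt_mul (sum_nonneg fun _ _ ↦ by positivity)] at hCS
  calc ∑ i ∈ s, ‖u i + v i‖ ^ 2
      ≤ ∑ i ∈ s, (‖u i‖ ^ 2 + 2 * (‖u i‖ * ‖v i‖) + ‖v i‖ ^ 2) := by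
        gcongr with i
        nlinarith [norm_add_le (u i) (v i), norm_nonneg (u i + v i)]
    _ ≤ _ := by
        rw [sum_add_distrib, sum_add_distrib, ← mul_sum]
        gcongr

lemma rpow_sum_rpow_le_of_sum_sq_le {ι : Type*} {s : Finset ι} {y : ι → ℝ} {p H : ℝ}
    (hy : ∀ i ∈ s, 0 ≤ y i) (hp : 0 < p) (hp2 : p ≤ 2) (hH : 0 ≤ H)
    (h : ∑ i ∈ s, y i ^ 2 ≤ #s * H ^ 2) :
    (∑ i ∈ s, y i ^ p) ^ (1 / p) ≤ (#s : ℝ) ^ (1 / p) * H := by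
  have hq : 1 ≤ 2 / p := by rw [le_div_iff₀ hp]; linarith
  have hsum : 0 ≤ ∑ i ∈ s, y i ^ p := sum_nonneg fun i hi ↦ Real.rpow_nonneg (hy i hi) p
  have hsq : ((∑ i ∈ s, y i ^ p) ^ (1 / p)) ^ 2 ≤ ((#s : ℝ) ^ (1 / p) * H) ^ 2 :=
    calc ((∑ i ∈ s, y i ^ p) ^ (1 / p)) ^ 2 = (∑ i ∈ s, y i ^ p) ^ (2 / p) := by
          rw [← Real.rpow_natCast, ← Real.rpow_mul hsum]; ring_nf
      _ ≤ (#s : ℝ) ^ (2 / p - 1) * ∑ i ∈ s, (y i ^ p) ^ (2 / p) :=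
          Real.rpow_sum_le_const_mul_sum_rpow_of_nonneg s hq
            fun i hi ↦ Real.rpow_nonneg (hy i hi) p
      _ = (#s : ℝ) ^ (2 / p - 1) * ∑ i ∈ s, y i ^ 2 := by
          congr 1
          refine sum_congr rfl fun i hi ↦ ?_
          rw [← Real.rpow_mul (hy i hi), mul_div_cancel₀ _ hp.ne', Real.rpow_two]
      _ ≤ (#s : ℝ) ^ (2 / p - 1) * (#s * H ^ 2) := by gcongr
      _ = ((#s : ℝ) ^ (1 / p) * H) ^ 2 := by
          rw [← mul_assoc, ← Real.rpow_add_one' (by positivity) (by positivity), mul_pow,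
            ← Real.rpow_natCast ((#s : ℝ) ^ (1 / p)), ← Real.rpow_mul (by positivity)]
          ring_nf
  exact (pow_le_pow_iff_left₀ (Real.rpow_nonneg hsum _) (by positivity) two_ne_zero).1 hsq

lemma raise_bound_step {ν r s x A B Y : ℝ} (hr : 0 ≤ r) (hrν : r + 1 ≤ ν) (hs : 0 ≤ s)
    (hx : 0 ≤ x) (hA : 0 ≤ A) (hB : 0 ≤ B) (hY : Y ≤ (r + 1) * (ν - r) / ν * s * B) :
    (r + 2) * (ν - r - 1) / ν * s * A + (x * A + 2 * √(x * A * Y) + Y) ≤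
      (r + 2) * (ν - r) / (ν + 1) * (s + x) * (A + B) := by
  have hν : 0 < ν := by linarith
  have hνr : 0 ≤ ν - r := by linarith
  have hνr1 : 0 ≤ ν - r - 1 := by linarith
  set P := ((r + 2) * (r + 1) * s + (r + 1) * (ν - r - 1) * ν * x) / (ν * (ν + 1)) with hP_def
  set R := ((ν - r) * (ν - r - 1) * s + (r + 2) * (ν - r) * ν * x) / (ν * (ν + 1)) with hR_def
  have hP : 0 ≤ P := by positivity
  have hR : 0 ≤ R := by positivity
  have hPR : x * ((r + 1) * (ν - r) / ν * s) ≤ P * R := by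
    have hgap : P * R - x * ((r + 1) * (ν - r) / ν * s) =
        (r + 1) * (r + 2) * (ν - r) * (ν - r - 1) * (s - ν * x) ^ 2 / (ν * (ν + 1)) ^ 2 := by
      rw [hP_def, hR_def]
      field_simp
      ring
    have : 0 ≤ (r + 1) * (r + 2) * (ν - r) * (ν - r - 1) * (s - ν * x) ^ 2 / (ν * (ν + 1)) ^ 2 :=
      by positivity
    linarith
  have hcross : 2 * √(x * A * Y) ≤ P * A + R * B := by
    calc 2 * √(x * A * Y) ≤ 2 * √((P * A) * (R * B)) := by
          refine mul_le_mul_of_nonneg_left (Real.sqrt_le_sqrt ?_) zero_le_two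
          calc x * A * Y ≤ x * A * ((r + 1) * (ν - r) / ν * s * B) := by gcongr
            _ = x * ((r + 1) * (ν - r) / ν * s) * (A * B) := by ring
            _ ≤ P * R * (A * B) := by gcongr
            _ = P * A * (R * B) := by ring
      _ ≤ P * A + R * B := by
          rw [Real.sqrt_mul (by positivity)]
          nlinarith [sq_nonneg (√(P * A) - √(R * B)), Real.sq_sqrt (mul_nonneg hP hA),
            Real.sq_sqrt (mul_nonneg hR hB)]
  have hsplit : (r + 2) * (ν - r) / (ν + 1) * (s + x) * (A + B) =
      (r + 2) * (ν - r - 1) / ν * s * A + x * A + (P * A + R * B) +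
        (r + 1) * (ν - r) / ν * s * B := by
    rw [hP_def, hR_def]
    field_simp
    ring
  linarith

variable {α : Type*} [DecidableEq α]

def raise (f : α → ℂ) (Q : Finset α → ℂ) (J : Finset α) : ℂ :=
  ∑ j ∈ J, f j * Q (J.erase j)

lemma raise_insert (f : α → ℂ) (Q : Finset α → ℂ) {a : α} {J : Finset α} (ha : a ∉ J) :
    raise f Q (insert a J) = f a * Q J + raise f (fun S ↦ Q (insert a S)) J := by
  rw [raise, raise, sum_insert ha, erase_insert ha]
  congr 1
  refine sum_congr rfl fun j hj ↦ ?_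
  rw [erase_insert_of_ne (ne_of_mem_of_not_mem hj ha).symm]

lemma sum_norm_raise_sq_powersetCard_one (f : α → ℂ) (Q : Finset α → ℂ) (U : Finset α) :
    ∑ J ∈ U.powersetCard 1, ‖raise f Q J‖ ^ 2 = (∑ j ∈ U, ‖f j‖ ^ 2) * ‖Q ∅‖ ^ 2 := by
  simp [powersetCard_one, raise, sum_mul, mul_pow]

lemma sum_norm_raise_insert_sq_le (f : α → ℂ) (Q : Finset α → ℂ) {a : α} {U : Finset α}
    (ha : a ∉ U) (k : ℕ) :
    ∑ J ∈ U.powersetCard k, ‖raise f Q (insert a J)‖ ^ 2 ≤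
      ‖f a‖ ^ 2 * ∑ S ∈ U.powersetCard k, ‖Q S‖ ^ 2 +
        2 * √(‖f a‖ ^ 2 * (∑ S ∈ U.powersetCard k, ‖Q S‖ ^ 2) *
          ∑ J ∈ U.powersetCard k, ‖raise f (fun S ↦ Q (insert a S)) J‖ ^ 2) +
        ∑ J ∈ U.powersetCard k, ‖raise f (fun S ↦ Q (insert a S)) J‖ ^ 2 := by
  rw [sum_congr rfl fun J hJ ↦ by
    rw [raise_insert f Q (notMem_mono (mem_powersetCard.1 hJ).1 ha)]]
  have hu : ∑ J ∈ U.powersetCard k, ‖f a * Q J‖ ^ 2 =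
      ‖f a‖ ^ 2 * ∑ S ∈ U.powersetCard k, ‖Q S‖ ^ 2 := by
    simp only [norm_mul, mul_pow, mul_sum]
  simpa only [hu] using sum_norm_add_sq_le (U.powersetCard k) (fun J ↦ f a * Q J)
    (raise f fun S ↦ Q (insert a S))

theorem sum_norm_raise_sq_le (f : α → ℂ) (Q : Finset α → ℂ) (U : Finset α) {k : ℕ}
    (hk : k < #U) :
    ∑ J ∈ U.powersetCard (k + 1), ‖raise f Q J‖ ^ 2 ≤
      (k + 1) * (#U - k) / #U * (∑ j ∈ U, ‖f j‖ ^ 2) * ∑ S ∈ U.powersetCard k, ‖Q S‖ ^ 2 := by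
  induction U using Finset.induction_on generalizing k Q with
  | empty => simp at hk
  | @insert a U ha ih =>
    rw [card_insert_of_notMem ha] at hk ⊢
    obtain _ | m := k
    · rw [sum_norm_raise_sq_powersetCard_one]
      have : ((#U : ℝ) + 1) ≠ 0 := by positivity
      simp [field]
    have hnew := sum_norm_raise_insert_sq_le f Q ha (m + 1)
    set n := #U
    set s := ∑ j ∈ U, ‖f j‖ ^ 2
    set x := ‖f a‖ ^ 2
    set A := ∑ S ∈ U.powersetCard (m + 1), ‖Q S‖ ^ 2
    set B := ∑ S ∈ U.powersetCard m, ‖Q (insert a S)‖ ^ 2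
    set Y := ∑ J ∈ U.powersetCard (m + 1), ‖raise f (fun S ↦ Q (insert a S)) J‖ ^ 2
    have hn : (m : ℝ) + 1 ≤ n := by exact_mod_cast (by omega : m + 1 ≤ n)
    have hsub : ∑ J ∈ U.powersetCard (m + 2), ‖raise f Q J‖ ^ 2 ≤
        (m + 2) * (n - m - 1) / n * s * A := by
      rcases (by omega : m + 1 < n ∨ m + 1 = n) with hm | hm
      · convert ih Q hm using 2; push_cast; ring
      · rw [powersetCard_eq_empty.2 (by omega), sum_empty]
        have : (n : ℝ) - m - 1 = 0 := by rw [← hm]; push_cast; ring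
        simp [this]
    have hY : Y ≤ (m + 1) * (n - m) / n * s * B := ih _ (by omega)
    calc ∑ J ∈ (insert a U).powersetCard (m + 1 + 1), ‖raise f Q J‖ ^ 2
        ≤ (m + 2) * (n - m - 1) / n * s * A + (x * A + 2 * √(x * A * Y) + Y) := by
          rw [sum_powersetCard_succ_insert ha]
          exact add_le_add hsub hnew
      _ ≤ (m + 2) * (n - m) / (n + 1) * (s + x) * (A + B) :=
          raise_bound_step (Nat.cast_nonneg m) hn (sum_nonneg fun _ _ ↦ by positivity)
            (by positivity) (sum_nonneg fun _ _ ↦ by positivity)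
            (sum_nonneg fun _ _ ↦ by positivity) hY
      _ = _ := by
          rw [sum_insert ha, sum_powersetCard_succ_insert ha]
          push_cast
          ring

def permOn {k : ℕ} (f : Fin k → α → ℂ) (S : Finset α) : ℂ :=
  ∑ e ∈ Fintype.piFinset (fun _ ↦ S) with Function.Injective e, ∏ i, f i (e i)

@[simp]
lemma permOn_zero (f : Fin 0 → α → ℂ) (S : Finset α) : permOn f S = 1 := by
  rw [permOn, filter_true_of_mem fun e _ ↦ Function.injective_of_subsingleton e]
  simp

lemma permOn_succ {k : ℕ} (f : Fin (k + 1) → α → ℂ) (S : Finset α) :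
    permOn f S = raise (f 0) (permOn (Fin.tail f)) S := by
  simp only [permOn, raise, mul_sum]
  rw [sum_sigma']
  refine sum_nbij' (fun e ↦ ⟨e 0, Fin.tail e⟩) (fun p ↦ Fin.cons p.1 p.2) ?_ ?_ ?_ ?_ ?_
  · intro e he
    obtain ⟨e₀, e', rfl⟩ := Fin.exists_cons e
    simp_all [Fin.cons_injective_iff, Fin.forall_fin_succ]
  · rintro ⟨j, e'⟩ he
    simp_all [Fin.cons_injective_iff, Fin.forall_fin_succ]
  · intro e _; simp
  · intro p _; simp
  · intro e _
    simp [Fin.prod_univ_succ, Fin.tail]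

lemma permOn_map_univ {k : ℕ} (f : Fin k → α → ℂ) (g : Fin k ↪ α) :
    permOn f (univ.map g) = ∑ σ : Equiv.Perm (Fin k), ∏ i, f i (g (σ i)) := by
  symm
  refine sum_bij (fun σ _ ↦ g ∘ σ) (fun σ _ ↦ ?_) (fun σ _ τ _ h ↦ ?_) (fun e he ↦ ?_)
    (fun _ _ ↦ rfl)
  · simpa using g.injective.comp σ.injective
  · exact Equiv.ext fun i ↦ g.injective (congrFun h i)
  · simp only [mem_filter, Fintype.mem_piFinset, mem_map, mem_univ, true_and] at he
    choose τ hτ using he.1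
    have hτinj : Function.Injective τ := fun i j hij ↦ he.2 (by rw [← hτ i, ← hτ j, hij])
    exact ⟨Equiv.ofBijective τ hτinj.bijective_of_finite, mem_univ _, funext fun i ↦ hτ i⟩

lemma perm_subMat_eq_permOn {N K : ℕ} (f : Fin K → Fin N → ℂ)
    (s : {s : Finset (Fin N) // s ∈ univ.powersetCard K}) :
    perm (subMat f s) = permOn f s.1 := by
  have hs : #s.1 = K := mem_powersetCard_univ.1 s.2
  set g := (s.1.orderEmbOfFin hs).toEmbedding
  calc perm (subMat f s)
      = ∑ σ : Equiv.Perm (Fin K), ∏ i, f i (g (σ⁻¹ i)) := by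
        refine sum_congr rfl fun σ _ ↦ ?_
        rw [← Equiv.prod_comp σ fun i ↦ f i (g (σ⁻¹ i))]
        simp [subMat, g]
    _ = ∑ σ : Equiv.Perm (Fin K), ∏ i, f i (g (σ i)) :=
        Fintype.sum_equiv (Equiv.inv _) _ _ fun _ ↦ rfl
    _ = permOn f s.1 := by
        rw [← permOn_map_univ, map_orderEmbOfFin_univ]

theorem sum_norm_permOn_sq_le (U : Finset α) {k : ℕ} (f : Fin k → α → ℂ) :
    ∑ S ∈ U.powersetCard k, ‖permOn f S‖ ^ 2 ≤
      (k.factorial : ℝ) ^ 2 * (#U).choose k / (#U : ℝ) ^ k * ∏ i, ∑ j ∈ U, ‖f i j‖ ^ 2 := by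
  induction k with
  | zero => simp
  | succ k ih =>
    rcases lt_or_ge k #U with hk | hk
    · have hchoose : ((#U).choose (k + 1) : ℝ) * (k + 1) = (#U).choose k * (#U - k) := by
        rw [← Nat.cast_sub hk.le]
        exact_mod_cast Nat.choose_succ_right_eq (#U) k
      calc ∑ S ∈ U.powersetCard (k + 1), ‖permOn f S‖ ^ 2
          = ∑ S ∈ U.powersetCard (k + 1), ‖raise (f 0) (permOn (Fin.tail f)) S‖ ^ 2 := by
            simp only [permOn_succ]
        _ ≤ (k + 1) * (#U - k) / #U * (∑ j ∈ U, ‖f 0 j‖ ^ 2) *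
              ∑ S ∈ U.powersetCard k, ‖permOn (Fin.tail f) S‖ ^ 2 :=
            sum_norm_raise_sq_le _ _ U hk
        _ ≤ (k + 1) * (#U - k) / #U * (∑ j ∈ U, ‖f 0 j‖ ^ 2) *
              ((k.factorial : ℝ) ^ 2 * (#U).choose k / (#U : ℝ) ^ k *
                ∏ i, ∑ j ∈ U, ‖Fin.tail f i j‖ ^ 2) := by
            have : (k : ℝ) ≤ #U := by exact_mod_cast hk.le
            gcongr
            exact ih _
        _ = _ := by
            simp only [Fin.prod_univ_succ, Nat.factorial_succ, Fin.tail]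
            push_cast
            linear_combination (-(k + 1) * (k.factorial : ℝ) ^ 2 / (#U : ℝ) ^ (k + 1) *
              (∑ j ∈ U, ‖f 0 j‖ ^ 2) * ∏ i : Fin k, ∑ j ∈ U, ‖f i.succ j‖ ^ 2) * hchoose
    · rw [powersetCard_eq_empty.2 (by omega), Nat.choose_eq_zero_of_lt (by omega)]
      simp

lemma vecEnorm_sq {N : ℕ} (f : Fin N → ℂ) : vecEnorm f ^ 2 = ∑ i, ‖f i‖ ^ 2 :=
  Real.sq_sqrt (sum_nonneg fun _ _ ↦ by positivity)

theorem Pp_functional_bound_general {N K : ℕ} (p : ℝ) (hp1 : 1 ≤ p) (hp2 : p ≤ 2)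
    (f : Fin K → Fin N → ℂ) :
    Ppow p f ^ (1 / p) ≤
      (N.choose K : ℝ) ^ (1 / p) *
        ((K.factorial : ℝ) / (N : ℝ) ^ ((K : ℝ) / 2)) * ∏ i, vecEnorm (f i) := by
  have hPpow : Ppow p f = ∑ S ∈ univ.powersetCard K, ‖permOn f S‖ ^ p := by
    simp only [Ppow, perm_subMat_eq_permOn]
    exact sum_attach _ fun S ↦ ‖permOn f S‖ ^ p
  have hcard : #(univ.powersetCard K : Finset (Finset (Fin N))) = N.choose K := by
    simp [card_powersetCard]
  have hN : ((N : ℝ) ^ ((K : ℝ) / 2)) ^ 2 = (N : ℝ) ^ K := by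
    rw [← Real.rpow_natCast, ← Real.rpow_mul (Nat.cast_nonneg N), ← Real.rpow_natCast]
    norm_num
  have hL2 : ∑ S ∈ univ.powersetCard K, ‖permOn f S‖ ^ 2 ≤
      (N.choose K : ℝ) *
        ((K.factorial : ℝ) / (N : ℝ) ^ ((K : ℝ) / 2) * ∏ i, vecEnorm (f i)) ^ 2 := by
    refine (sum_norm_permOn_sq_le univ f).trans_eq ?_
    simp only [card_univ, Fintype.card_fin, mul_pow, div_pow, hN, ← prod_pow, vecEnorm_sq]
    ring
  rw [hPpow, mul_assoc, ← hcard]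
  exact rpow_sum_rpow_le_of_sum_sq_le (fun _ _ ↦ norm_nonneg _) (by linarith) hp2
    (mul_nonneg (by positivity) (prod_nonneg fun _ _ ↦ Real.sqrt_nonneg _)) (hcard ▸ hL2)

theorem Pp_functional_bound {N K : ℕ} (p : ℝ) (hp1 : 1 ≤ p) (hp2 : p ≤ 2)
    (hK : 1 ≤ K) (hKN : K ≤ N) (f : Fin K → Fin N → ℂ) :
    Ppow p f ^ (1 / p) ≤
      (N.choose K : ℝ) ^ (1 / p) *
        ((K.factorial : ℝ) / (N : ℝ) ^ ((K : ℝ) / 2)) * ∏ i, vecEnorm (f i) :=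
  Pp_functional_bound_general p hp1 hp2 f
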